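/- arXiv:2112.01623 — 2 statements merged into one kernel-verified Lean document; each statement's English description precedes it below -/
import Mathlib

section
/- Let n ≥ 1, let mᵢ > 0 for i = 1,…,n, and let U : (ℝ³)ⁿ → ℝ be differentiable and invariant under rotations: U(Q x₁, …, Q xₙ) = U(x₁, …, xₙ) for every Q ∈ SO(3). Define Fᵢ(x) = −∇_{xᵢ} U(x). Let h > 0 and let sequences x_{i,k}, v_{i,k} ∈ ℝ³ (k ∈ ℕ) evolve by the velocity Verlet (explicit Newmark) map: x_{i,k+1} = x_{i,k} + h v_{i,k} + (h²/(2mᵢ)) Fᵢ(x_k) and v_{i,k+1} = v_{i,k} + (h/(2mᵢ))(Fᵢ(x_k) + Fᵢ(x_{k+1})). Then the total angular momentum is exactly conserved: Σᵢ mᵢ x_{i,k} × v_{i,k} = Σᵢ mᵢ x_{i,0} × v_{i,0} for all k. -/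
/-!
A Verlet step changes `mᵢ xᵢ × vᵢ` by exactly `(h/2) (xᵢ × Fᵢ(x_k) + x_{i,k+1} × Fᵢ(x_{k+1}))`:
the `h²` terms cancel because `v × F + F × v = 0` and `F × F = 0`. Summed over the particles the
increment is `h/2` times the total torque at `x_k` and at `x_{k+1}`, and the total torque of a
rotation-invariant potential vanishes: `t ↦ Rot (t • ω)` is a curve in `SO(3)` through `1` with
velocity `S ω`, so differentiating `t ↦ U (Rot (t • ω) x)` at `0` gives
`0 = ∑ᵢ ⟪∇ᵢ U, ω × xᵢ⟫ = ω ⬝ (∑ᵢ xᵢ × ∇ᵢ U)` for every `ω`.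
-/

open Matrix

noncomputable section

/-- Vectors in ℝ³ with the Euclidean norm. -/
abbrev V3 : Type := EuclideanSpace ℝ (Fin 3)

/-- 3×3 real matrices. -/
abbrev M3 : Type := Matrix (Fin 3) (Fin 3) ℝ

/-- Cross-product (skew-symmetric) matrix of a vector: `S a *ᵥ v = a ×₃ v`. -/
def S (a : V3) : M3 := !![0, -a 2, a 1; a 2, 0, -a 0; -a 1, a 0, 0]

/-- Rescaled-Rodrigues rotation matrix `R(α) = I + (4/(4+‖α‖²))(S(α) + (1/2)S(α)²)`. -/
def Rot (α : V3) : M3 := 1 + (4 / (4 + ‖α‖ ^ 2)) • (S α + (1 / 2 : ℝ) • (S α * S α))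

/-- Action of a matrix on a vector. -/
def mulV (A : M3) (v : V3) : V3 := WithLp.toLp 2 (A.mulVec v)

lemma S_mulVec (a v : V3) : S a *ᵥ v = a ⨯₃ v := by
  ext i; fin_cases i <;> simp [S, cross_apply, mulVec, dotProduct, Fin.sum_univ_three] <;> ring

lemma S_transpose (a : V3) : (S a)ᵀ = -S a := by
  ext i j; fin_cases i <;> fin_cases j <;> simp [S]

lemma S_smul (t : ℝ) (a : V3) : S (t • a) = t • S a := by
  ext i j; fin_cases i <;> fin_cases j <;> simp [S]

lemma norm_sq_eq_sum_three (a : V3) : ‖a‖ ^ 2 = a 0 ^ 2 + a 1 ^ 2 + a 2 ^ 2 := by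
  rw [EuclideanSpace.norm_sq_eq, Fin.sum_univ_three]; simp

lemma S_mul_S_mul_S (a : V3) : S a * S a * S a = -(‖a‖ ^ 2 • S a) := by
  rw [norm_sq_eq_sum_three]
  ext i j
  fin_cases i <;> fin_cases j <;> simp [S, mul_apply, Fin.sum_univ_three] <;> ring

section Rodrigues

variable {K R : Type*} [Field K] [CharZero K] [Ring R] [Algebra K R]

def rodrigues (c : K) (A : R) : R := 1 + c • A + (c / 2) • (A * A)

lemma rodrigues_neg_mul_self {A : R} {s c : K} (hA : A * A * A = -(s • A))
    (hc : c * (4 + s) = 4) : rodrigues c (-A) * rodrigues c A = 1 := by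
  have hA' : A * (A * A) = -(s • A) := by rw [← mul_assoc, hA]
  have h4 : A * A * (A * A) = -(s • (A * A)) := by rw [← mul_assoc, hA, neg_mul, smul_mul_assoc]
  have : rodrigues c (-A) * rodrigues c A = 1 + (c - c * (c * (4 + s)) / 4) • (A * A) := by
    simp only [rodrigues, neg_mul, mul_neg, neg_neg, smul_neg, add_mul, mul_add, smul_mul_assoc,
      mul_smul_comm, smul_smul, one_mul, mul_one, mul_assoc, hA', h4]
    module
  rw [this, hc]
  norm_num

end Rodrigues

lemma Rot_eq_rodrigues (α : V3) : Rot α = rodrigues (4 / (4 + ‖α‖ ^ 2)) (S α) := by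
  rw [Rot, rodrigues, smul_add, smul_smul, ← add_assoc, mul_one_div]

lemma transpose_rodrigues (c : ℝ) (A : M3) : (rodrigues c A)ᵀ = rodrigues c Aᵀ := by
  simp [rodrigues, transpose_mul]

lemma Rot_transpose_mul_self (α : V3) : (Rot α)ᵀ * Rot α = 1 := by
  rw [Rot_eq_rodrigues, transpose_rodrigues, S_transpose]
  exact rodrigues_neg_mul_self (S_mul_S_mul_S α) (div_mul_cancel₀ 4 (by positivity))

lemma det_Rot (α : V3) : (Rot α).det = 1 := by
  have hpos : 0 < 4 + (α 0 ^ 2 + α 1 ^ 2 + α 2 ^ 2) := by positivity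
  rw [Rot, norm_sq_eq_sum_three, det_fin_three]
  simp [S]
  field_simp
  ring

lemma mulV_Rot_smul (t : ℝ) (ω a : V3) :
    mulV (Rot (t • ω)) a = a + (4 / (4 + t ^ 2 * ‖ω‖ ^ 2)) •
      (t • mulV (S ω) a + (t ^ 2 / 2) • mulV (S ω) (mulV (S ω) a)) := by
  have hnorm : ‖t • ω‖ ^ 2 = t ^ 2 * ‖ω‖ ^ 2 := by
    rw [norm_smul, mul_pow, Real.norm_eq_abs, sq_abs]
  ext j
  simp only [mulV, Rot, hnorm, S_smul, add_mulVec, smul_mulVec, mulVec_mulVec, one_mulVec,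
    smul_mul_smul_comm, PiLp.add_apply, PiLp.smul_apply, Pi.add_apply, Pi.smul_apply, smul_eq_mul]
  ring

lemma mulV_Rot_zero_smul (ω a : V3) : mulV (Rot ((0 : ℝ) • ω)) a = a := by
  rw [mulV_Rot_smul]
  simp

lemma hasDerivAt_mulV_Rot_smul (ω a : V3) :
    HasDerivAt (fun t : ℝ => mulV (Rot (t • ω)) a) (mulV (S ω) a) 0 := by
  set u := mulV (S ω) a
  set w := mulV (S ω) u
  have hc : DifferentiableAt ℝ (fun t : ℝ => 4 / (4 + t ^ 2 * ‖ω‖ ^ 2)) 0 :=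
    (differentiableAt_const _).div (by fun_prop) (by positivity)
  have hf : HasDerivAt (fun t : ℝ => t • u + (t ^ 2 / 2) • w) u 0 := by
    simpa using ((hasDerivAt_id (0 : ℝ)).smul_const u).fun_add
      (((hasDerivAt_pow 2 (0 : ℝ)).div_const 2).smul_const w)
  simp_rw [mulV_Rot_smul]
  simpa using (hc.hasDerivAt.smul hf).const_add a

section PartialGradient

variable {ι E : Type*} [Fintype ι] [DecidableEq ι]
  [NormedAddCommGroup E] [InnerProductSpace ℝ E] [CompleteSpace E]

def partialGradient (U : (ι → E) → ℝ) (x : ι → E) (i : ι) : E :=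
  gradient (fun y => U (Function.update x i y)) (x i)

lemma inner_partialGradient {U : (ι → E) → ℝ} {x : ι → E} (hU : DifferentiableAt ℝ U x)
    (i : ι) (w : E) : inner ℝ (partialGradient U x i) w = fderiv ℝ U x (Pi.single i w) := by
  have hpartial : HasFDerivAt (fun y => U (Function.update x i y))
      ((fderiv ℝ U x).comp (.pi (Pi.single i (.id ℝ E)))) (x i) := by
    have hU' : HasFDerivAt U (fderiv ℝ U x) (Function.update x i (x i)) := by
      rw [Function.update_eq_self]
      exact hU.hasFDerivAt
    exact hU'.comp (x i) (hasFDerivAt_update x (x i))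
  have h := congrArg (· w) (hpartial.differentiableAt.hasGradientAt.hasFDerivAt.unique hpartial)
  simpa [partialGradient, Pi.apply_single (fun _ (L : E →L[ℝ] E) => L w) (fun _ => rfl)] using h

lemma sum_inner_partialGradient {U : (ι → E) → ℝ} {x : ι → E} (hU : DifferentiableAt ℝ U x)
    (w : ι → E) : ∑ i, inner ℝ (partialGradient U x i) (w i) = fderiv ℝ U x w := by
  simp_rw [inner_partialGradient hU, ← map_sum, Finset.univ_sum_single]

end PartialGradient

lemma fderiv_apply_eq_zero_of_comp_eq_const {F : Type*} [NormedAddCommGroup F] [NormedSpace ℝ F]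
    {U : F → ℝ} {γ : ℝ → F} {x v : F} (hγ : HasDerivAt γ v 0) (hγ0 : γ 0 = x)
    (hU : DifferentiableAt ℝ U x) (hconst : ∀ t, U (γ t) = U x) : fderiv ℝ U x v = 0 := by
  subst hγ0
  have hcomp := hU.hasFDerivAt.comp_hasDerivAt 0 hγ
  rw [show U ∘ γ = fun _ => U (γ 0) from funext hconst] at hcomp
  exact hcomp.unique (hasDerivAt_const _ _)

lemma inner_mulV_S (g ω a : V3) : inner ℝ g (mulV (S ω) a) = ω ⬝ᵥ crossProduct a g := by
  rw [triple_product_permutation, triple_product_permutation, dotProduct_comm]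
  simp [mulV, S_mulVec, EuclideanSpace.inner_eq_star_dotProduct]

section Invariance

variable {ι : Type*} [Fintype ι] {U : (ι → V3) → ℝ} {x : ι → V3}

lemma fderiv_apply_mulV_S_eq_zero (hU : DifferentiableAt ℝ U x)
    (hinv : ∀ Q : M3, Qᵀ * Q = 1 → Q.det = 1 → U (fun i => mulV Q (x i)) = U x) (ω : V3) :
    fderiv ℝ U x (fun i => mulV (S ω) (x i)) = 0 :=
  fderiv_apply_eq_zero_of_comp_eq_const
    (hasDerivAt_pi.2 fun i => hasDerivAt_mulV_Rot_smul ω (x i))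
    (funext fun i => mulV_Rot_zero_smul ω (x i)) hU
    (fun _ => hinv _ (Rot_transpose_mul_self _) (det_Rot _))

lemma sum_cross_partialGradient_eq_zero [DecidableEq ι] (hU : DifferentiableAt ℝ U x)
    (hinv : ∀ Q : M3, Qᵀ * Q = 1 → Q.det = 1 → U (fun i => mulV Q (x i)) = U x) :
    ∑ i, crossProduct (x i) (partialGradient U x i : V3) = 0 := by
  have hω : ∀ ω : V3, ω ⬝ᵥ ∑ i, crossProduct (x i) (partialGradient U x i : V3) = 0 := fun ω => by
    simp_rw [dotProduct_sum, ← inner_mulV_S, sum_inner_partialGradient hU]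
    exact fderiv_apply_mulV_S_eq_zero hU hinv ω
  exact dotProduct_self_eq_zero.mp (hω (WithLp.toLp 2 _))

end Invariance

lemma cross_verlet_step {μ h : ℝ} (hμ : μ ≠ 0) {a a' b f f' : Fin 3 → ℝ}
    (ha' : a' = a + h • b + (h ^ 2 / (2 * μ)) • f) :
    μ • a' ⨯₃ (b + (h / (2 * μ)) • (f + f')) =
      μ • a ⨯₃ b + (h / 2) • a ⨯₃ f + (h / 2) • a' ⨯₃ f' := by
  subst ha'
  simp only [map_add, map_smul, LinearMap.add_apply, LinearMap.smul_apply, cross_self,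
    ← cross_anticomm f b, smul_add, smul_neg, smul_zero, add_zero]
  match_scalars <;> field_simp
  ring

section Verlet

variable {ι : Type*} [Fintype ι]

def angularMomentum (m : ι → ℝ) (x v : ι → V3) : Fin 3 → ℝ :=
  ∑ i, m i • crossProduct (x i) (v i)

def torque (F : ι → (ι → V3) → V3) (x : ι → V3) : Fin 3 → ℝ :=
  ∑ i, crossProduct (x i) (F i x)

lemma angularMomentum_verlet_step {m : ι → ℝ} (hm : ∀ i, m i ≠ 0) {F : ι → (ι → V3) → V3}
    {h : ℝ} {x x' v v' : ι → V3} (hx : ∀ i, x' i = x i + h • v i + (h ^ 2 / (2 * m i)) • F i x)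
    (hv : ∀ i, v' i = v i + (h / (2 * m i)) • (F i x + F i x')) :
    angularMomentum m x' v' = angularMomentum m x v + (h / 2) • (torque F x + torque F x') := by
  have hstep : ∀ i, m i • crossProduct (x' i) (v' i) = m i • crossProduct (x i) (v i)
      + (h / 2) • crossProduct (x i) (F i x) + (h / 2) • crossProduct (x' i) (F i x') := fun i => by
    rw [hv i]
    exact cross_verlet_step (hm i) (by rw [hx i]; rfl)
  simp only [angularMomentum, torque, hstep, Finset.sum_add_distrib, ← Finset.smul_sum, smul_add,
    add_assoc]

theorem angularMomentum_verlet_eq {m : ι → ℝ} (hm : ∀ i, m i ≠ 0) {F : ι → (ι → V3) → V3}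
    (hF : ∀ x, torque F x = 0) {h : ℝ} {x v : ℕ → ι → V3}
    (hx : ∀ k i, x (k + 1) i = x k i + h • v k i + (h ^ 2 / (2 * m i)) • F i (x k))
    (hv : ∀ k i, v (k + 1) i = v k i + (h / (2 * m i)) • (F i (x k) + F i (x (k + 1)))) (k : ℕ) :
    angularMomentum m (x k) (v k) = angularMomentum m (x 0) (v 0) := by
  induction k with
  | zero => rfl
  | succ k ih =>
    rw [angularMomentum_verlet_step hm (hx k) (hv k), hF, hF, ih, add_zero, smul_zero, add_zero]

end Verlet

theorem stmt12_general (n : ℕ) (m : Fin n → ℝ) (hm : ∀ i, 0 < m i)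
    (U : (Fin n → V3) → ℝ) (hU : Differentiable ℝ U)
    (hinv : ∀ (Q : M3), Qᵀ * Q = 1 → Q.det = 1 →
      ∀ x : Fin n → V3, U (fun i => mulV Q (x i)) = U x)
    (F : Fin n → (Fin n → V3) → V3)
    (hF : ∀ i x, F i x = - gradient (fun y => U (Function.update x i y)) (x i))
    (h : ℝ) (x v : ℕ → Fin n → V3)
    (hx : ∀ k i, x (k + 1) i = x k i + h • v k i + (h ^ 2 / (2 * m i)) • F i (x k))
    (hv : ∀ k i, v (k + 1) i = v k i + (h / (2 * m i)) • (F i (x k) + F i (x (k + 1)))) :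
    ∀ k, ∑ i, m i • crossProduct (x k i) (v k i) =
      ∑ i, m i • crossProduct (x 0 i) (v 0 i) := by
  have htorque : ∀ z, torque F z = 0 := fun z => by
    have hforce : ∀ i, F i z = -partialGradient U z i := fun i => hF i z
    simp only [torque, hforce, WithLp.ofLp_neg, map_neg, Finset.sum_neg_distrib,
      sum_cross_partialGradient_eq_zero (hU z) (fun Q hQ hdet => hinv Q hQ hdet z), neg_zero]
  exact angularMomentum_verlet_eq (fun i => (hm i).ne') htorque hx hv

/-- Exact conservation of total angular momentum by the velocity Verlet
(explicit Newmark) map when the potential is invariant under rotations. -/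
theorem stmt12 (n : ℕ) (hn : 1 ≤ n) (m : Fin n → ℝ) (hm : ∀ i, 0 < m i)
    (U : (Fin n → V3) → ℝ) (hU : Differentiable ℝ U)
    (hinv : ∀ (Q : M3), Qᵀ * Q = 1 → Q.det = 1 →
      ∀ x : Fin n → V3, U (fun i => mulV Q (x i)) = U x)
    (F : Fin n → (Fin n → V3) → V3)
    (hF : ∀ i x, F i x = - gradient (fun y => U (Function.update x i y)) (x i))
    (h : ℝ) (hh : 0 < h) (x v : ℕ → Fin n → V3)
    (hx : ∀ k i, x (k + 1) i = x k i + h • v k i + (h ^ 2 / (2 * m i)) • F i (x k))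
    (hv : ∀ k i, v (k + 1) i = v k i + (h / (2 * m i)) • (F i (x k) + F i (x (k + 1)))) :
    ∀ k, ∑ i, m i • crossProduct (x k i) (v k i) =
      ∑ i, m i • crossProduct (x 0 i) (v 0 i) :=
  stmt12_general n m hm U hU hinv F hF h x v hx hv
end
end

section
/- Let n ≥ 1 and let U : (M₃(ℝ))ⁿ → ℝ be differentiable and invariant under the diagonal left action of SO(3): U(Q R₁, …, Q Rₙ) = U(R₁, …, Rₙ) for every Q ∈ SO(3) and all (R₁, …, Rₙ). For a configuration with each Rᵢ ∈ SO(3), let Gᵢ denote the 3×3 matrix of partial derivatives (Gᵢ)_{ab} = ∂U/∂(Rᵢ)_{ab}. Then the total moment vanishes: Σᵢ (Rᵢ Gᵢᵀ − Gᵢ Rᵢᵀ) = 0. Consequently, along any sequence of SO(3)ⁿ configurations R_{·,k}, with moments RMᵢ,ₖ defined by S(RMᵢ,ₖ) = R_{i,k} Gᵢᵀ(R_{·,k}) − Gᵢ(R_{·,k}) R_{i,k}ᵀ and angular velocities updated by Ω_{i,k+1} = Ω_{i,k} + (h/(2Jᵢ))(RMᵢ,ₖ + RMᵢ,ₖ₊₁)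 with Jᵢ > 0 and h > 0, the total angular momentum Σᵢ Jᵢ Ω_{i,k} is constant in k. -/
open Matrix

noncomputable section

attribute [local instance] Matrix.normedAddCommGroup Matrix.normedSpace

/-!
Differentiating `t ↦ U (exp (t A) R₁, …, exp (t A) Rₙ)` at `t = 0` for a skew-symmetric `A`, where
`exp (t A) ∈ SO(3)`, shows that the derivative of `U` in the direction `(A Rᵢ)ᵢ` vanishes. In
coordinates this derivative is `tr (A M)` with `M = Σᵢ Rᵢ Gᵢᵀ`, so `M` is orthogonal to every
skew-symmetric matrix, i.e. symmetric, and `Σᵢ (Rᵢ Gᵢᵀ − Gᵢ Rᵢᵀ) = M − Mᵀ = 0`. As `S` is linear and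
injective, `Σᵢ RMᵢ,ₖ = 0` for every `k`, and the update then changes `Σᵢ Jᵢ Ωᵢ,ₖ` by
`(h/2) Σᵢ (RMᵢ,ₖ + RMᵢ,ₖ₊₁) = 0`.
-/

open NormedSpace (exp)

theorem trace_mul_transpose {m n R : Type*} [Fintype m] [Fintype n] [CommSemiring R]
    (X Y : Matrix m n R) : trace (X * Yᵀ) = ∑ a, ∑ b, X a b * Y a b := by
  simp [trace, mul_apply]

theorem pi_single_eq_sum_single {ι m n R : Type*} [Fintype ι] [DecidableEq ι] [Fintype m]
    [DecidableEq m] [Fintype n] [DecidableEq n] [CommSemiring R] (W : ι → Matrix m n R) :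
    W = ∑ i, ∑ a, ∑ b, W i a b • Pi.single i (single a b 1) := by
  ext i a b
  simp [Finset.sum_apply, Pi.single_apply, ← matrix_eq_sum_single]

section Moment

variable {m ι : Type*} [Fintype m] [DecidableEq m] [Fintype ι]

/- `exp` does not depend on the norm; the `L∞`-operator norm makes matrices a normed algebra with
the same topology as the sup norm in force here. -/
theorem hasDerivAt_exp_smul_zero (A : Matrix m m ℝ) :
    HasDerivAt (fun t : ℝ => exp (t • A)) A 0 := by
  have h := @hasDerivAt_exp_smul_const ℝ (Matrix m m ℝ) _ Matrix.linftyOpNormedRing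
    Matrix.linftyOpNormedAlgebra (inferInstanceAs (CompleteSpace (m → m → ℝ))) A 0
  simp only [zero_smul, NormedSpace.exp_zero, one_mul] at h
  exact h

theorem transpose_exp_mul_exp {A : Matrix m m ℝ} (hA : Aᵀ = -A) : (exp A)ᵀ * exp A = 1 := by
  rw [← exp_transpose, hA, Matrix.exp_neg, nonsing_inv_mul _ ((isUnit_exp A).map detMonoidHom)]

theorem det_exp_of_transpose_eq_neg {A : Matrix m m ℝ} (hA : Aᵀ = -A) : (exp A).det = 1 := by
  have hsq : (exp A).det ^ 2 = 1 := by
    have := congrArg det (transpose_exp_mul_exp hA)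
    rwa [det_mul, det_transpose, det_one, ← sq] at this
  -- `det (exp A) = det (exp (A / 2)) ^ 2`, which rules out the root `-1`.
  have hnonneg : 0 ≤ (exp A).det := by
    rw [show A = 2 • ((1 / 2 : ℝ) • A) by module, Matrix.exp_nsmul, det_pow]
    positivity
  nlinarith

theorem fderiv_apply_mul_left_eq_zero {U : (ι → Matrix m m ℝ) → ℝ} {R : ι → Matrix m m ℝ}
    (hU : DifferentiableAt ℝ U R)
    (hinv : ∀ Q : Matrix m m ℝ, Qᵀ * Q = 1 → Q.det = 1 → U (fun i => Q * R i) = U R)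
    {A : Matrix m m ℝ} (hA : Aᵀ = -A) :
    fderiv ℝ U R (fun i => A * R i) = 0 := by
  let L : Matrix m m ℝ →L[ℝ] (ι → Matrix m m ℝ) :=
    (LinearMap.pi fun i => LinearMap.mulRight ℝ (R i)).toContinuousLinearMap
  have hγ : HasDerivAt (fun t : ℝ => fun i => exp (t • A) * R i) (fun i => A * R i) 0 :=
    L.hasFDerivAt.comp_hasDerivAt (0 : ℝ) (hasDerivAt_exp_smul_zero A)
  have hγ0 : (fun i => exp ((0 : ℝ) • A) * R i) = R := by
    simp only [zero_smul, NormedSpace.exp_zero, one_mul]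
  have hUR : HasFDerivAt U (fderiv ℝ U R) (fun i => exp ((0 : ℝ) • A) * R i) := by
    rw [hγ0]; exact hU.hasFDerivAt
  have hUγ := hUR.comp_hasDerivAt (0 : ℝ) hγ
  have hconst : (fun t : ℝ => U (fun i => exp (t • A) * R i)) = fun _ => U R := by
    have htA : ∀ t : ℝ, (t • A)ᵀ = -(t • A) := fun t => by rw [transpose_smul, hA, smul_neg]
    funext t
    exact hinv _ (transpose_exp_mul_exp (htA t)) (det_exp_of_transpose_eq_neg (htA t))
  rw [Function.comp_def, hconst] at hUγ
  exact (hasDerivAt_const (0 : ℝ) (U R)).unique hUγ |>.symm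

theorem transpose_eq_self_of_trace_mul_eq_zero {R : Type*} [CommRing R] {M : Matrix m m R}
    (hM : ∀ A : Matrix m m R, Aᵀ = -A → trace (A * M) = 0) : Mᵀ = M := by
  ext p q
  have h := hM (single q p 1 - single p q 1) (by simp [transpose_sub])
  rw [sub_mul, trace_sub, trace_single_mul, trace_single_mul, sub_eq_zero] at h
  simpa using h.symm

theorem sum_mul_transpose_sub_eq_zero [DecidableEq ι] {U : (ι → Matrix m m ℝ) → ℝ}
    {R : ι → Matrix m m ℝ} (hU : DifferentiableAt ℝ U R)
    (hinv : ∀ Q : Matrix m m ℝ, Qᵀ * Q = 1 → Q.det = 1 → U (fun i => Q * R i) = U R)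
    {G : ι → Matrix m m ℝ} (hG : ∀ i a b, G i a b = fderiv ℝ U R (Pi.single i (single a b 1))) :
    ∑ i, (R i * (G i)ᵀ - G i * (R i)ᵀ) = 0 := by
  have hM : (∑ i, R i * (G i)ᵀ)ᵀ = ∑ i, R i * (G i)ᵀ := by
    refine transpose_eq_self_of_trace_mul_eq_zero fun A hA => ?_
    rw [← fderiv_apply_mul_left_eq_zero hU hinv hA, pi_single_eq_sum_single (fun i => A * R i)]
    simp only [map_sum, map_smul, smul_eq_mul, ← hG, Finset.mul_sum, trace_sum,
      ← Matrix.mul_assoc, trace_mul_transpose]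
  rw [Finset.sum_sub_distrib, ← hM, transpose_sum]
  simp only [transpose_mul, transpose_transpose, sub_self]

end Moment

theorem S_add (a b : V3) : S (a + b) = S a + S b := by
  ext i j; fin_cases i <;> fin_cases j <;> simp [S] <;> ring

theorem S_sum {κ : Type*} (s : Finset κ) (f : κ → V3) : S (∑ i ∈ s, f i) = ∑ i ∈ s, S (f i) :=
  map_sum (AddMonoidHom.mk' S S_add) f s

theorem S_eq_zero_iff {a : V3} : S a = 0 ↔ a = 0 := by
  refine ⟨fun h => ?_, fun h => ?_⟩
  · ext j
    fin_cases j
    · simpa [S] using congrFun (congrFun h 2) 1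
    · simpa [S] using congrFun (congrFun h 0) 2
    · simpa [S] using congrFun (congrFun h 1) 0
  · simpa [h] using S_add 0 0

section Conservation

variable {𝕜 ι E : Type*} [Field 𝕜] [Fintype ι] [AddCommGroup E] [Module 𝕜 E]

theorem sum_smul_eq_of_forall_sum_eq_zero (h : 𝕜) {J : ι → 𝕜} (hJ : ∀ i, J i ≠ 0)
    {F Ω : ℕ → ι → E} (hF : ∀ k, ∑ i, F k i = 0)
    (hΩ : ∀ k i, Ω (k + 1) i = Ω k i + (h / (2 * J i)) • (F k i + F (k + 1) i)) (k : ℕ) :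
    ∑ i, J i • Ω k i = ∑ i, J i • Ω 0 i := by
  induction k with
  | zero => rfl
  | succ k ih =>
    have hstep : ∀ i, J i • Ω (k + 1) i = J i • Ω k i + (h / 2) • (F k i + F (k + 1) i) := by
      intro i
      rw [hΩ, smul_add, smul_smul, mul_div_left_comm, div_mul_cancel_right₀ (hJ i), div_eq_mul_inv]
    rw [← ih, Finset.sum_congr rfl fun i _ => hstep i, Finset.sum_add_distrib, ← Finset.smul_sum,
      Finset.sum_add_distrib, hF, hF, add_zero, smul_zero, add_zero]

end Conservation

theorem stmt13_general (n : ℕ)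
    (U : (Fin n → M3) → ℝ) (hU : Differentiable ℝ U)
    (hinv : ∀ (Q : M3), Qᵀ * Q = 1 → Q.det = 1 →
      ∀ R : Fin n → M3, U (fun i => Q * R i) = U R)
    (G : Fin n → (Fin n → M3) → M3)
    (hG : ∀ i R a b, G i R a b = fderiv ℝ U R (Pi.single i (Matrix.single a b 1))) :
    (∀ R : Fin n → M3, (∀ i, (R i)ᵀ * R i = 1 ∧ (R i).det = 1) →
      ∑ i, (R i * (G i R)ᵀ - G i R * (R i)ᵀ) = 0) ∧
    (∀ (h : ℝ), 0 < h → ∀ (Jv : Fin n → ℝ), (∀ i, 0 < Jv i) →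
      ∀ (Rs : ℕ → Fin n → M3), (∀ k i, (Rs k i)ᵀ * Rs k i = 1 ∧ (Rs k i).det = 1) →
      ∀ (RM : ℕ → Fin n → V3),
        (∀ k i, S (RM k i) = Rs k i * (G i (Rs k))ᵀ - G i (Rs k) * (Rs k i)ᵀ) →
      ∀ (Ω : ℕ → Fin n → V3),
        (∀ k i, Ω (k + 1) i = Ω k i + (h / (2 * Jv i)) • (RM k i + RM (k + 1) i)) →
      ∀ k, ∑ i, Jv i • Ω k i = ∑ i, Jv i • Ω 0 i) := by
  have moment : ∀ R : Fin n → M3, ∑ i, (R i * (G i R)ᵀ - G i R * (R i)ᵀ) = 0 := fun R =>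
    sum_mul_transpose_sub_eq_zero (hU R) (fun Q hQ hdet => hinv Q hQ hdet R) (hG · R)
  refine ⟨fun R _ => moment R, fun h _ Jv hJ Rs _ RM hRM Ω hΩ => ?_⟩
  refine sum_smul_eq_of_forall_sum_eq_zero h (fun i => (hJ i).ne') (fun k => ?_) hΩ
  rw [← S_eq_zero_iff, S_sum]
  simp only [hRM]
  exact moment (Rs k)

/-- If U on (M₃(ℝ))ⁿ is invariant under the diagonal left SO(3) action, the
total moment Σᵢ (Rᵢ Gᵢᵀ − Gᵢ Rᵢᵀ) vanishes on SO(3)ⁿ configurations, and hence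
the angular-velocity update Ωᵢ,ₖ₊₁ = Ωᵢ,ₖ + (h/(2Jᵢ))(RMᵢ,ₖ + RMᵢ,ₖ₊₁)
conserves the total angular momentum Σᵢ Jᵢ Ωᵢ,ₖ exactly. -/
theorem stmt13 (n : ℕ) (hn : 1 ≤ n)
    (U : (Fin n → M3) → ℝ) (hU : Differentiable ℝ U)
    (hinv : ∀ (Q : M3), Qᵀ * Q = 1 → Q.det = 1 →
      ∀ R : Fin n → M3, U (fun i => Q * R i) = U R)
    (G : Fin n → (Fin n → M3) → M3)
    (hG : ∀ i R a b, G i R a b = fderiv ℝ U R (Pi.single i (Matrix.single a b 1))) :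
    (∀ R : Fin n → M3, (∀ i, (R i)ᵀ * R i = 1 ∧ (R i).det = 1) →
      ∑ i, (R i * (G i R)ᵀ - G i R * (R i)ᵀ) = 0) ∧
    (∀ (h : ℝ), 0 < h → ∀ (Jv : Fin n → ℝ), (∀ i, 0 < Jv i) →
      ∀ (Rs : ℕ → Fin n → M3), (∀ k i, (Rs k i)ᵀ * Rs k i = 1 ∧ (Rs k i).det = 1) →
      ∀ (RM : ℕ → Fin n → V3),
        (∀ k i, S (RM k i) = Rs k i * (G i (Rs k))ᵀ - G i (Rs k) * (Rs k i)ᵀ) →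
      ∀ (Ω : ℕ → Fin n → V3),
        (∀ k i, Ω (k + 1) i = Ω k i + (h / (2 * Jv i)) • (RM k i + RM (k + 1) i)) →
      ∀ k, ∑ i, Jv i • Ω k i = ∑ i, Jv i • Ω 0 i) :=
  stmt13_general n U hU hinv G hG
end
end
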